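/- arXiv:math-ph/0301007 — 4 statements merged into one kernel-verified Lean document; each statement's English description precedes it below -/
import Mathlib

section
/- Let E, F be orthogonal projections on an infinite-dimensional complex Hilbert space H, both of the same finite rank N, with E∧F = 0 (the ranges of E and F have no nonzero common vector) and Tr[(E − F)²] < 2. Then for every unit vector e in the range of E one has F·P_e ≠ 0 (equivalently Fe ≠ 0), and for every unit vector f in the range of F one has E·P_f ≠ 0 (equivalently Ef ≠ 0). -/
open scoped InnerProductSpace

variable {H : Type*} [NormedAddCommGroup H] [InnerProductSpace ℂ H] [CompleteSpace H]

/-- The trace of a bounded operator on a Hilbert space, computed along a Hilbert basis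
(for trace-class — in particular finite-rank — operators this is the usual,
basis-independent, trace `Tr`). -/
noncomputable def traceAlong {ι : Type*} (b : HilbertBasis ι ℂ H) (A : H →L[ℂ] H) : ℂ :=
  ∑' i, (inner ℂ (b i) (A (b i)) : ℂ)

/-- The absolute value `|A| := √(A⋆A)` of a bounded operator, via the continuous
functional calculus. -/
noncomputable def absCLM (A : H →L[ℂ] H) : H →L[ℂ] H := CFC.sqrt (star A * A)

/-- The Hilbert–Schmidt norm `‖A‖₂ := √(Tr(A⋆A))`, computed along a Hilbert basis. -/
noncomputable def hsNormAlong {ι : Type*} (b : HilbertBasis ι ℂ H) (A : H →L[ℂ] H) : ℝ :=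
  Real.sqrt (traceAlong b (star A * A)).re

/-- The trace norm `‖A‖₁ := Tr|A|`, computed along a Hilbert basis. -/
noncomputable def trNormAlong {ι : Type*} (b : HilbertBasis ι ℂ H) (A : H →L[ℂ] H) : ℝ :=
  (traceAlong b (absCLM A)).re

/-- An orthogonal projection: a bounded idempotent self-adjoint operator. -/
def IsOrthogonalProjection {H : Type*} [NormedAddCommGroup H] [InnerProductSpace ℂ H]
    [CompleteSpace H] (E : H →L[ℂ] H) : Prop :=
  IsSelfAdjoint E ∧ E * E = E

/-!
Put `T = E - F`. If a unit vector `e ∈ ran E` had `F e = 0`, then, since the ranks agree, `E`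
could not be injective on `ran F`, giving a unit vector `f ∈ ran F` with `E f = 0`. Then
`T e = e`, `T f = -f` and `e ⊥ f`, so Bessel's inequality in every `T bᵢ` gives
`Tr[T²] = ∑ᵢ ‖T bᵢ‖² ≥ ‖T e‖² + ‖T f‖² = 2`. The other half follows by exchanging `E` and `F`.
-/

section HilbertSchmidt

variable {𝕜 V W ι : Type*} [RCLike 𝕜] [NormedAddCommGroup V] [InnerProductSpace 𝕜 V]
  [NormedAddCommGroup W] [InnerProductSpace 𝕜 W]

theorem HilbertBasis.hasSum_norm_inner_sq (b : HilbertBasis ι 𝕜 V) (x : V) :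
    HasSum (fun i => ‖⟪b i, x⟫_𝕜‖ ^ 2) (‖x‖ ^ 2) := by
  have h := (b.hasSum_inner_mul_inner x x).mapL RCLike.reCLM
  simp only [RCLike.reCLM_apply, inner_mul_symm_re_eq_norm, norm_mul, norm_inner_symm x] at h
  simpa [← sq, inner_self_eq_norm_sq] using h

variable [CompleteSpace V] [CompleteSpace W]

open ContinuousLinearMap in
theorem HilbertBasis.summable_norm_apply_sq (b : HilbertBasis ι 𝕜 V) (A : V →L[𝕜] W)
    [FiniteDimensional 𝕜 (LinearMap.range (A : V →ₗ[𝕜] W))] :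
    Summable fun i => ‖A (b i)‖ ^ 2 := by
  set o := stdOrthonormalBasis 𝕜 (LinearMap.range (A : V →ₗ[𝕜] W))
  have hparseval : ∀ i, ‖A (b i)‖ ^ 2 = ∑ k, ‖⟪b i, adjoint A (o k)⟫_𝕜‖ ^ 2 := fun i => by
    have h := o.sum_sq_norm_inner_left ⟨A (b i), LinearMap.mem_range_self _ _⟩
    simp only [Submodule.coe_inner, Submodule.coe_norm] at h
    simp [← h, adjoint_inner_right]
  simp only [hparseval]
  exact summable_sum fun k _ => (b.hasSum_norm_inner_sq _).summable

open ContinuousLinearMap in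
theorem HilbertBasis.sum_norm_adjoint_apply_sq_le_tsum (b : HilbertBasis ι 𝕜 V) (A : V →L[𝕜] W)
    (hA : Summable fun i => ‖A (b i)‖ ^ 2) {κ : Type*} {v : κ → W} (hv : Orthonormal 𝕜 v)
    (s : Finset κ) :
    ∑ k ∈ s, ‖adjoint A (v k)‖ ^ 2 ≤ ∑' i, ‖A (b i)‖ ^ 2 := by
  have hsum : HasSum (fun i => ∑ k ∈ s, ‖⟪v k, A (b i)⟫_𝕜‖ ^ 2)
      (∑ k ∈ s, ‖adjoint A (v k)‖ ^ 2) := by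
    refine hasSum_sum fun k _ => ?_
    simpa [adjoint_inner_right, norm_inner_symm] using b.hasSum_norm_inner_sq (adjoint A (v k))
  exact hasSum_le (fun i => hv.sum_inner_products_le (A (b i))) hsum hA.hasSum

end HilbertSchmidt

open ContinuousLinearMap in
theorem re_traceAlong_star_mul_self {ι : Type*} (b : HilbertBasis ι ℂ H) (A : H →L[ℂ] H) :
    (traceAlong b (star A * A)).re = ∑' i, ‖A (b i)‖ ^ 2 := by
  have h : ∀ i, ⟪b i, (star A * A) (b i)⟫_ℂ = ((‖A (b i)‖ ^ 2 : ℝ) : ℂ) := fun i => by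
    rw [star_eq_adjoint, mul_apply_eq_comp, adjoint_inner_right, inner_self_eq_norm_sq_to_K]
    norm_cast
  rw [traceAlong, funext h, ← Complex.ofReal_tsum, Complex.ofReal_re]

namespace IsOrthogonalProjection

variable {E F : H →L[ℂ] H}

theorem apply_of_mem_range (hE : IsOrthogonalProjection E) {x : H}
    (hx : x ∈ LinearMap.range (E : H →ₗ[ℂ] H)) : E x = x := by
  obtain ⟨y, rfl⟩ := hx
  exact congr($(hE.2) y)

theorem exists_mem_range_ne_zero_apply_eq_zero (hE : IsOrthogonalProjection E)
    (hF : IsOrthogonalProjection F) [FiniteDimensional ℂ (LinearMap.range (E : H →ₗ[ℂ] H))]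
    [FiniteDimensional ℂ (LinearMap.range (F : H →ₗ[ℂ] H))]
    (hrank : Module.finrank ℂ (LinearMap.range (E : H →ₗ[ℂ] H))
      = Module.finrank ℂ (LinearMap.range (F : H →ₗ[ℂ] H)))
    {x : H} (hx : x ∈ LinearMap.range (E : H →ₗ[ℂ] H)) (hx0 : x ≠ 0) (hFx : F x = 0) :
    ∃ y ∈ LinearMap.range (F : H →ₗ[ℂ] H), y ≠ 0 ∧ E y = 0 := by
  by_contra! hinj
  set ψ := (E : H →ₗ[ℂ] H).restrict (p := LinearMap.range (F : H →ₗ[ℂ] H))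
    fun y _ => LinearMap.mem_range_self _ y
  have hψ : Function.Injective ψ := by
    rw [← LinearMap.ker_eq_bot, Submodule.eq_bot_iff]
    rintro ⟨y, hy⟩ hψy
    by_contra hy0
    exact hinj y hy (by simpa using hy0) congr(Subtype.val $hψy)
  obtain ⟨⟨w, hw⟩, hψw⟩ :=
    (LinearMap.injective_iff_surjective_of_finrank_eq_finrank hrank.symm).mp hψ ⟨x, hx⟩
  have hEw : E w = x := congr(Subtype.val $hψw)
  have : ⟪x, x⟫_ℂ = 0 := calc
    ⟪x, x⟫_ℂ = ⟪x, E w⟫_ℂ := by rw [hEw]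
    _ = ⟪E x, w⟫_ℂ := (hE.1.isSymmetric x w).symm
    _ = ⟪x, F w⟫_ℂ := by rw [hE.apply_of_mem_range hx, hF.apply_of_mem_range hw]
    _ = ⟪F x, w⟫_ℂ := (hF.1.isSymmetric x w).symm
    _ = 0 := by rw [hFx, inner_zero_left]
  exact hx0 (inner_self_eq_zero.mp this)

open ContinuousLinearMap in
theorem two_le_re_traceAlong_sub_mul_sub {ι : Type*} (b : HilbertBasis ι ℂ H)
    (hE : IsOrthogonalProjection E) (hF : IsOrthogonalProjection F)
    [FiniteDimensional ℂ (LinearMap.range (E : H →ₗ[ℂ] H))]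
    [FiniteDimensional ℂ (LinearMap.range (F : H →ₗ[ℂ] H))]
    (hrank : Module.finrank ℂ (LinearMap.range (E : H →ₗ[ℂ] H))
      = Module.finrank ℂ (LinearMap.range (F : H →ₗ[ℂ] H)))
    {x : H} (hx : x ∈ LinearMap.range (E : H →ₗ[ℂ] H)) (hx1 : ‖x‖ = 1) (hFx : F x = 0) :
    2 ≤ (traceAlong b ((E - F) * (E - F))).re := by
  have hx0 : x ≠ 0 := norm_ne_zero_iff.mp (by simp [hx1])
  obtain ⟨y, hy, hy0, hEy⟩ := hE.exists_mem_range_ne_zero_apply_eq_zero hF hrank hx hx0 hFx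
  set u : H := (‖y‖ : ℂ)⁻¹ • y
  have hu1 : ‖u‖ = 1 := norm_smul_inv_norm hy0
  have hEu : E u = 0 := by simp [u, hEy]
  have hFu : F u = u := hF.apply_of_mem_range (Submodule.smul_mem _ _ hy)
  have hxu : ⟪x, u⟫_ℂ = 0 := calc
    ⟪x, u⟫_ℂ = ⟪E x, u⟫_ℂ := by rw [hE.apply_of_mem_range hx]
    _ = ⟪x, E u⟫_ℂ := hE.1.isSymmetric x u
    _ = 0 := by rw [hEu, inner_zero_right]
  have hv : Orthonormal ℂ ![x, u] := by
    simp [orthonormal_vecCons_iff, hx1, hu1, hxu]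
  set T := E - F
  have hT : IsSelfAdjoint T := hE.1.sub hF.1
  have : FiniteDimensional ℂ (LinearMap.range (T : H →ₗ[ℂ] H)) := by
    refine Submodule.finiteDimensional_of_le (S₂ := LinearMap.range (E : H →ₗ[ℂ] H) ⊔
      LinearMap.range (F : H →ₗ[ℂ] H)) ?_
    rw [toLinearMap_sub, sub_eq_add_neg, ← LinearMap.range_neg (F : H →ₗ[ℂ] H)]
    exact LinearMap.range_add_le _ _
  calc (2 : ℝ) = ∑ k, ‖adjoint T (![x, u] k)‖ ^ 2 := by
        norm_num [hT.adjoint_eq, T, hFx, hE.apply_of_mem_range hx, hEu, hFu, hx1, hu1]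
    _ ≤ ∑' i, ‖T (b i)‖ ^ 2 :=
        b.sum_norm_adjoint_apply_sq_le_tsum T (b.summable_norm_apply_sq T) hv _
    _ = (traceAlong b (T * T)).re := by rw [← re_traceAlong_star_mul_self, hT.star_eq]

end IsOrthogonalProjection

theorem statement2_general {H : Type*} [NormedAddCommGroup H] [InnerProductSpace ℂ H] [CompleteSpace H]
    {ι : Type*} (b : HilbertBasis ι ℂ H) (N : ℕ)
    (E F : H →L[ℂ] H) (hE : IsOrthogonalProjection E) (hF : IsOrthogonalProjection F)
    (hEfd : FiniteDimensional ℂ (LinearMap.range (E : H →ₗ[ℂ] H)))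
    (hFfd : FiniteDimensional ℂ (LinearMap.range (F : H →ₗ[ℂ] H)))
    (hEr : Module.finrank ℂ (LinearMap.range (E : H →ₗ[ℂ] H)) = N)
    (hFr : Module.finrank ℂ (LinearMap.range (F : H →ₗ[ℂ] H)) = N)
    (htr : (traceAlong b ((E - F) * (E - F))).re < 2) :
    (∀ e ∈ LinearMap.range (E : H →ₗ[ℂ] H), ‖e‖ = 1 → F e ≠ 0) ∧
      (∀ f ∈ LinearMap.range (F : H →ₗ[ℂ] H), ‖f‖ = 1 → E f ≠ 0) := by
  have hswap : (F - E) * (F - E) = (E - F) * (E - F) := by rw [← neg_sub E F, neg_mul_neg]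
  refine ⟨fun e he he1 hFe => ?_, fun f hf hf1 hEf => ?_⟩
  · have := hE.two_le_re_traceAlong_sub_mul_sub b hF (hEr.trans hFr.symm) he he1 hFe
    linarith
  · have := hF.two_le_re_traceAlong_sub_mul_sub b hE (hFr.trans hEr.symm) hf hf1 hEf
    rw [hswap] at this
    linarith

/-- Let `E, F` be orthogonal projections of the same finite rank `N` on an
infinite-dimensional complex Hilbert space, with `E ∧ F = 0` (no nonzero common vectors of the
ranges) and `Tr[(E − F)²] < 2`.  Then `F e ≠ 0` for every unit vector `e ∈ ran E`
(equivalently `F ⬝ P_e ≠ 0`), and `E f ≠ 0` for every unit vector `f ∈ ran F`. -/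
theorem statement2 {H : Type*} [NormedAddCommGroup H] [InnerProductSpace ℂ H] [CompleteSpace H]
    (hinf : ¬FiniteDimensional ℂ H) {ι : Type*} (b : HilbertBasis ι ℂ H) (N : ℕ)
    (E F : H →L[ℂ] H) (hE : IsOrthogonalProjection E) (hF : IsOrthogonalProjection F)
    (hEfd : FiniteDimensional ℂ (LinearMap.range (E : H →ₗ[ℂ] H)))
    (hFfd : FiniteDimensional ℂ (LinearMap.range (F : H →ₗ[ℂ] H)))
    (hEr : Module.finrank ℂ (LinearMap.range (E : H →ₗ[ℂ] H)) = N)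
    (hFr : Module.finrank ℂ (LinearMap.range (F : H →ₗ[ℂ] H)) = N)
    (hmeet : LinearMap.range (E : H →ₗ[ℂ] H) ⊓ LinearMap.range (F : H →ₗ[ℂ] H) = ⊥)
    (htr : (traceAlong b ((E - F) * (E - F))).re < 2) :
    (∀ e ∈ LinearMap.range (E : H →ₗ[ℂ] H), ‖e‖ = 1 → F e ≠ 0) ∧
      (∀ f ∈ LinearMap.range (F : H →ₗ[ℂ] H), ‖f‖ = 1 → E f ≠ 0) :=
  statement2_general b N E F hE hF hEfd hFfd hEr hFr htr
end

section
/- Let E, F be orthogonal projections on an infinite-dimensional complex Hilbert space H, both of the same finite rank N, with E∧F = 0 and Tr[(E − F)²] < 2, and let {e_1, …, e_N} be an orthonormal basis of ran E and {f_1, …, f_N} an orthonormal basis of ran F such that ⟨f_j, e_k⟩ = 0 for j ≠ k and ⟨f_j, e_j⟩ ≠ 0 for all j. Then there exists an orthonormal system {e_1^⊥, …, e_N^⊥} contained in the range of (E∨F) − E and complex numbers α_j, β_j with α_j·β_j ≠ 0 such that f_j = α_j e_j + β_j e_j^⊥ for every j = 1, …, N. -/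
open scoped InnerProductSpace

variable {H : Type*} [NormedAddCommGroup H] [InnerProductSpace ℂ H] [CompleteSpace H]

/-!
Since `f j` is orthogonal to every `e k` with `k ≠ j`, the residual `f j - ⟪e j, f j⟫ • e j` is
orthogonal to all of `ran E`. Two residuals are orthogonal because `f j ⊥ f k`, `f j ⊥ e k` and
`e j ⊥ (residual of f k)`, and each residual is nonzero: otherwise `f j` would lie in
`ran E ⊓ ran F = ⊥`. The normalized residuals are the vectors `e_j^⊥`, with `α j = ⟪e j, f j⟫`
and `β j` the norm of the residual.
-/

section Residual

variable {𝕜 E ι : Type*} [RCLike 𝕜] [NormedAddCommGroup E] [InnerProductSpace 𝕜 E]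

theorem Orthonormal.inner_sub_inner_smul_eq_zero {e : ι → E} (he : Orthonormal 𝕜 e) {x : E}
    {j : ι} (hx : ∀ k, k ≠ j → ⟪e k, x⟫_𝕜 = 0) (k : ι) :
    ⟪e k, x - ⟪e j, x⟫_𝕜 • e j⟫_𝕜 = 0 := by
  classical
  rw [inner_sub_right, inner_smul_right, orthonormal_iff_ite.mp he k j]
  by_cases hkj : k = j
  · subst hkj; simp
  · simp [hkj, hx k hkj]

theorem Orthonormal.sub_inner_smul_mem_orthogonal_span {e : ι → E} (he : Orthonormal 𝕜 e)
    {x : E} {j : ι} (hx : ∀ k, k ≠ j → ⟪e k, x⟫_𝕜 = 0) :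
    x - ⟪e j, x⟫_𝕜 • e j ∈ (Submodule.span 𝕜 (Set.range e))ᗮ := by
  rw [← Submodule.span_singleton_le_iff_mem, ← Submodule.isOrtho_iff_le, Submodule.isOrtho_comm,
    Submodule.isOrtho_span]
  rintro _ ⟨k, rfl⟩ _ rfl
  exact he.inner_sub_inner_smul_eq_zero hx k

theorem Orthonormal.inner_sub_inner_smul_pairwise {e f : ι → E} (he : Orthonormal 𝕜 e)
    (hf : Orthonormal 𝕜 f) (hfe : ∀ j k, j ≠ k → ⟪e k, f j⟫_𝕜 = 0) {j k : ι} (hjk : j ≠ k) :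
    ⟪f j - ⟪e j, f j⟫_𝕜 • e j, f k - ⟪e k, f k⟫_𝕜 • e k⟫_𝕜 = 0 := by
  rw [inner_sub_left, inner_smul_left,
    he.inner_sub_inner_smul_eq_zero (fun l hl => hfe k l hl.symm) j, mul_zero, sub_zero,
    inner_sub_right, inner_smul_right, hf.inner_eq_zero hjk,
    inner_eq_zero_symm.mp (hfe j k hjk), mul_zero, sub_zero]

theorem orthonormal_inv_norm_smul {v : ι → E} (hv0 : ∀ i, v i ≠ 0)
    (hv : Pairwise fun i j => ⟪v i, v j⟫_𝕜 = 0) :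
    Orthonormal 𝕜 fun i => (‖v i‖ : 𝕜)⁻¹ • v i := by
  refine ⟨fun i => norm_smul_inv_norm (hv0 i), fun i j hij => ?_⟩
  simp only [inner_smul_left, inner_smul_right, hv hij, mul_zero]

end Residual

theorem Submodule.sub_smul_ne_zero_of_inf_eq_bot {R M : Type*} [Ring R] [AddCommGroup M]
    [Module R M] {U V : Submodule R M} (hUV : U ⊓ V = ⊥) {x y : M} (hy : y ∈ U) (hx : x ∈ V)
    (hx0 : x ≠ 0) (c : R) : x - c • y ≠ 0 := by
  intro h
  have hxU : x ∈ U ⊓ V := ⟨(sub_eq_zero.mp h) ▸ U.smul_mem c hy, hx⟩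
  rw [hUV, Submodule.mem_bot] at hxU
  exact hx0 hxU

theorem statement4_general {H : Type*} [NormedAddCommGroup H] [InnerProductSpace ℂ H] (N : ℕ)
    (E F : H →L[ℂ] H)
    (hmeet : LinearMap.range (E : H →ₗ[ℂ] H) ⊓ LinearMap.range (F : H →ₗ[ℂ] H) = ⊥)
    (e f : Fin N → H)
    (he : Orthonormal ℂ e) (heE : ∀ j, e j ∈ LinearMap.range (E : H →ₗ[ℂ] H))
    (hespan : Submodule.span ℂ (Set.range e) = LinearMap.range (E : H →ₗ[ℂ] H))
    (hf : Orthonormal ℂ f) (hfF : ∀ j, f j ∈ LinearMap.range (F : H →ₗ[ℂ] H))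
    (horth : ∀ j k, j ≠ k → (inner ℂ (f j) (e k) : ℂ) = 0)
    (hdiag : ∀ j, (inner ℂ (f j) (e j) : ℂ) ≠ 0) :
    ∃ (ebot : Fin N → H) (α β : Fin N → ℂ),
      Orthonormal ℂ ebot ∧
      (∀ j, ebot j ∈ (LinearMap.range (E : H →ₗ[ℂ] H) ⊔ LinearMap.range (F : H →ₗ[ℂ] H)) ⊓
        (LinearMap.range (E : H →ₗ[ℂ] H))ᗮ) ∧
      (∀ j, α j * β j ≠ 0) ∧ (∀ j, f j = α j • e j + β j • ebot j) := by
  set w : Fin N → H := fun j => f j - ⟪e j, f j⟫_ℂ • e j with hw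
  have hfe : ∀ j k, j ≠ k → ⟪e k, f j⟫_ℂ = 0 := fun j k hjk => inner_eq_zero_symm.mp (horth j k hjk)
  have hw0 : ∀ j, w j ≠ 0 := fun j =>
    Submodule.sub_smul_ne_zero_of_inf_eq_bot hmeet (heE j) (hfF j) (hf.ne_zero j) _
  have hnorm : ∀ j, (‖w j‖ : ℂ) ≠ 0 := fun j => by exact_mod_cast norm_ne_zero_iff.mpr (hw0 j)
  refine ⟨fun j => (‖w j‖ : ℂ)⁻¹ • w j, fun j => ⟪e j, f j⟫_ℂ, fun j => ‖w j‖,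
    orthonormal_inv_norm_smul hw0 fun j k => he.inner_sub_inner_smul_pairwise hf hfe,
    fun j => ⟨?_, ?_⟩, fun j => mul_ne_zero ?_ (hnorm j), fun j => ?_⟩
  · exact Submodule.smul_mem _ _ (Submodule.sub_mem _ (Submodule.mem_sup_right (hfF j))
      (Submodule.smul_mem _ _ (Submodule.mem_sup_left (heE j))))
  · rw [← hespan]
    exact Submodule.smul_mem _ _
      (he.sub_inner_smul_mem_orthogonal_span fun k hkj => hfe j k hkj.symm)
  · exact fun h => hdiag j (inner_eq_zero_symm.mp h)
  · rw [smul_smul, mul_inv_cancel₀ (hnorm j), one_smul, hw, add_sub_cancel]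

/-- With `E, F` orthogonal projections of the same finite rank `N` on an
infinite-dimensional complex Hilbert space, `E ∧ F = 0`, `Tr[(E − F)²] < 2`, and orthonormal
bases `{e_j}` of `ran E` and `{f_j}` of `ran F` with `⟪f_j, e_k⟫ = 0` for `j ≠ k` and
`⟪f_j, e_j⟫ ≠ 0`:  there exist an orthonormal system `{e_j^⊥}` in the range of `(E ∨ F) − E`
(i.e. in `(ran E ⊔ ran F) ⊓ (ran E)ᗮ`) and complex scalars `α_j, β_j` with `α_j·β_j ≠ 0` such
that `f_j = α_j e_j + β_j e_j^⊥` for all `j`. -/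
theorem statement4 {H : Type*} [NormedAddCommGroup H] [InnerProductSpace ℂ H] [CompleteSpace H]
    (hinf : ¬FiniteDimensional ℂ H) {ι : Type*} (b : HilbertBasis ι ℂ H) (N : ℕ)
    (E F : H →L[ℂ] H) (hE : IsOrthogonalProjection E) (hF : IsOrthogonalProjection F)
    (hEfd : FiniteDimensional ℂ (LinearMap.range (E : H →ₗ[ℂ] H)))
    (hFfd : FiniteDimensional ℂ (LinearMap.range (F : H →ₗ[ℂ] H)))
    (hEr : Module.finrank ℂ (LinearMap.range (E : H →ₗ[ℂ] H)) = N)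
    (hFr : Module.finrank ℂ (LinearMap.range (F : H →ₗ[ℂ] H)) = N)
    (hmeet : LinearMap.range (E : H →ₗ[ℂ] H) ⊓ LinearMap.range (F : H →ₗ[ℂ] H) = ⊥)
    (htr : (traceAlong b ((E - F) * (E - F))).re < 2)
    (e f : Fin N → H)
    (he : Orthonormal ℂ e) (heE : ∀ j, e j ∈ LinearMap.range (E : H →ₗ[ℂ] H))
    (hespan : Submodule.span ℂ (Set.range e) = LinearMap.range (E : H →ₗ[ℂ] H))
    (hf : Orthonormal ℂ f) (hfF : ∀ j, f j ∈ LinearMap.range (F : H →ₗ[ℂ] H))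
    (hfspan : Submodule.span ℂ (Set.range f) = LinearMap.range (F : H →ₗ[ℂ] H))
    (horth : ∀ j k, j ≠ k → (inner ℂ (f j) (e k) : ℂ) = 0)
    (hdiag : ∀ j, (inner ℂ (f j) (e j) : ℂ) ≠ 0) :
    ∃ (ebot : Fin N → H) (α β : Fin N → ℂ),
      Orthonormal ℂ ebot ∧
      (∀ j, ebot j ∈ (LinearMap.range (E : H →ₗ[ℂ] H) ⊔ LinearMap.range (F : H →ₗ[ℂ] H)) ⊓
        (LinearMap.range (E : H →ₗ[ℂ] H))ᗮ) ∧
      (∀ j, α j * β j ≠ 0) ∧ (∀ j, f j = α j • e j + β j • ebot j) :=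
  statement4_general N E F hmeet e f he heE hespan hf hfF horth hdiag
end

section
/- Let x, y be unit vectors in a complex Hilbert space H. Then the operator norm of the difference of the corresponding rank-one projections is ‖P_x − P_y‖ = √(1 − |⟨x, y⟩|²). -/
/-!
Write `T = P_x - P_y` and `r = 1 - |⟪x, y⟫|²`. Since `P_x P_y P_x = |⟪x, y⟫|² P_x` and symmetrically,
expanding the cube of a difference of idempotents gives `T³ = r T`. As `T` is self-adjoint, the
C*-identity gives `‖T‖⁴ = ‖T⁴‖ = r ‖T²‖ = r ‖T‖²`, so `‖T‖² = r` unless `T = 0`; and `T = 0` forces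
`r = 0` because `r = ⟪x, T x⟫ ≤ ‖T‖`.
-/

/-- The rank-one orthogonal projection `P_x : z ↦ ⟪x, z⟫ • x` determined by a (unit) vector
`x`. -/
noncomputable def rankOneProj {H : Type*} [NormedAddCommGroup H] [InnerProductSpace ℂ H]
    (x : H) : H →L[ℂ] H :=
  (innerSL ℂ x).smulRight x

theorem IsIdempotentElem.sub_pow_three_eq_smul {R A : Type*} [CommRing R] [Ring A] [Algebra R A]
    {p q : A} {s : R} (hp : IsIdempotentElem p) (hq : IsIdempotentElem q)
    (hpqp : p * q * p = s • p) (hqpq : q * p * q = s • q) :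
    (p - q) ^ 3 = (1 - s) • (p - q) := by
  calc (p - q) ^ 3 = (p * p) * p - p * q * p - q * (p * p) + (q * q) * p
        - (p * p) * q + p * (q * q) + q * p * q - (q * q) * q := by noncomm_ring
    _ = p - p * q * p + q * p * q - q := by simp only [hp.eq, hq.eq]; abel
    _ = (1 - s) • (p - q) := by
        rw [hpqp, hqpq, sub_smul, smul_sub, smul_sub, one_smul, one_smul]; abel

theorem IsSelfAdjoint.norm_pow_four_eq_of_pow_three_eq_smul {𝕜 A : Type*} [NormedField 𝕜]
    [NormedRing A] [StarRing A] [CStarRing A] [NormedAlgebra 𝕜 A] {a : A} {r : 𝕜}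
    (ha : IsSelfAdjoint a) (h : a ^ 3 = r • a) : ‖a‖ ^ 4 = ‖r‖ * ‖a‖ ^ 2 := by
  have h4 : a ^ 4 = r • a ^ 2 := by rw [pow_succ', h, mul_smul_comm, ← sq]
  calc ‖a‖ ^ 4 = ‖a ^ 4‖ := by simpa using (ha.norm_pow_two_pow 2).symm
    _ = ‖r‖ * ‖a‖ ^ 2 := by rw [h4, norm_smul, ← pow_one 2, ha.norm_pow_two_pow 1]

namespace InnerProductSpace

variable {𝕜 E : Type*} [RCLike 𝕜] [NormedAddCommGroup E] [InnerProductSpace 𝕜 E]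

theorem isSelfAdjoint_rankOne_self [CompleteSpace E] (x : E) :
    IsSelfAdjoint (rankOne 𝕜 x x) :=
  adjoint_rankOne x x

theorem rankOne_self_mul_rankOne_self_mul_rankOne_self (x y : E) :
    rankOne 𝕜 x x * rankOne 𝕜 y y * rankOne 𝕜 x x
      = ((‖⟪x, y⟫_𝕜‖ ^ 2 : ℝ) : 𝕜) • rankOne 𝕜 x x := by
  ext z
  simp only [mul_apply_eq_comp, rankOne_apply, inner_smul_right, smul_smul, smul_apply]
  rw [← inner_conj_symm y x, mul_assoc, RCLike.conj_mul]
  congr 1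
  push_cast
  ring

theorem sub_norm_inner_sq_le_norm_rankOne_sub {x y : E} (hx : ‖x‖ = 1) :
    1 - ‖⟪x, y⟫_𝕜‖ ^ 2 ≤ ‖rankOne 𝕜 x x - rankOne 𝕜 y y‖ := by
  set T := rankOne 𝕜 x x - rankOne 𝕜 y y
  have hxTx : ⟪x, T x⟫_𝕜 = ((1 - ‖⟪x, y⟫_𝕜‖ ^ 2 : ℝ) : 𝕜) := by
    simp only [T, sub_apply, rankOne_apply, inner_sub_right, inner_smul_right,
      inner_self_eq_norm_sq_to_K, hx]
    rw [← inner_conj_symm y x, RCLike.conj_mul]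
    push_cast
    ring
  calc 1 - ‖⟪x, y⟫_𝕜‖ ^ 2 ≤ ‖⟪x, T x⟫_𝕜‖ := by
        rw [hxTx, RCLike.norm_ofReal]; exact le_abs_self _
    _ ≤ ‖x‖ * ‖T x‖ := norm_inner_le_norm _ _
    _ ≤ ‖T‖ := by simpa [hx] using T.le_opNorm x

end InnerProductSpace

open InnerProductSpace in
/-- For unit vectors `x, y` in a complex Hilbert space,
`‖P_x − P_y‖ = √(1 − |⟪x, y⟫|²)`. -/
theorem statement11 {H : Type*} [NormedAddCommGroup H] [InnerProductSpace ℂ H] [CompleteSpace H]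
    (x y : H) (hx : ‖x‖ = 1) (hy : ‖y‖ = 1) :
    ‖rankOneProj x - rankOneProj y‖ = Real.sqrt (1 - ‖(inner ℂ x y : ℂ)‖ ^ 2) := by
  set r := 1 - ‖(inner ℂ x y : ℂ)‖ ^ 2
  set T := rankOneProj x - rankOneProj y
  have hT : T = rankOne ℂ x x - rankOne ℂ y y := rfl
  have hr : 0 ≤ r :=
    sub_nonneg.2 (pow_le_one₀ (norm_nonneg _) (by simpa [hx, hy] using norm_inner_le_norm x y))
  have hcube : T ^ 3 = (r : ℂ) • T := by
    rw [hT, (isIdempotentElem_rankOne_self hx).sub_pow_three_eq_smul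
      (isIdempotentElem_rankOne_self hy) (rankOne_self_mul_rankOne_self_mul_rankOne_self x y)
      (by rw [rankOne_self_mul_rankOne_self_mul_rankOne_self, norm_inner_symm])]
    simp [r]
  have hTsa : IsSelfAdjoint T := (isSelfAdjoint_rankOne_self x).sub (isSelfAdjoint_rankOne_self y)
  have h4 : ‖T‖ ^ 4 = r * ‖T‖ ^ 2 := by
    simpa [abs_of_nonneg hr] using hTsa.norm_pow_four_eq_of_pow_three_eq_smul hcube
  have hle : r ≤ ‖T‖ := sub_norm_inner_sq_le_norm_rankOne_sub hx
  rcases eq_or_ne ‖T‖ 0 with hT0 | hT0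
  · rw [hT0, show r = 0 by linarith, Real.sqrt_zero]
  · rw [← Real.sqrt_sq (norm_nonneg T)]
    exact congrArg Real.sqrt (mul_right_cancel₀ (pow_ne_zero 2 hT0) (by rw [← h4]; ring))
end

section
/- Let E, F be orthogonal projections on a complex Hilbert space H, both of the same finite rank N. Set Q := E∧F, E′ := E − Q, F′ := F − Q, E′^⊥ := (E∨F) − E, F′^⊥ := (E∨F) − F, and N′ := N − rank(Q). Then E′∧F′ = 0 and E′^⊥∧F′^⊥ = 0; the projections E′, F′, E′^⊥, F′^⊥ all have rank N′; and Tr[(E − F)²] = Tr[(E′ − F′)²] = Tr[(E′^⊥ − F′^⊥)²] = 2[N − Tr(EF)] = 2[N′ − Tr(E′F′)] = 2[N′ − Tr(E′^⊥F′^⊥)]. -/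
/-!
If `ran P ≤ ran R` for orthogonal projections `P, R`, then `R - P` is the projection onto
`(ran P)ᗮ ⊓ ran R`. This gives the ranks, and the two disjointness claims reduce to
`ran Q ⊓ (ran Q)ᗮ = ⊥` and, via `(ran E)ᗮ ⊓ (ran F)ᗮ = (ran E ⊔ ran F)ᗮ = (ran G)ᗮ`, to
`ran G ⊓ (ran G)ᗮ = ⊥`.

For the traces: if `(vⱼ)` is an orthonormal basis of the finite-dimensional range of `P`, then
`P * B` has trace `∑ⱼ ⟪vⱼ, B vⱼ⟫` along every Hilbert basis. Hence `Tr P = rank P` and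
`Tr (F E) = ∑ⱼₖ |⟪vⱼ, wₖ⟫|² = Tr (E F)`, so `(E - F)² = E + F - E F - F E` has trace
`2 (N - Tr (E F))`. The other two values follow from `(E - Q)(F - Q) = E F - Q`,
`(G - E)(G - F) = G - F - E + E F` and `rank G + rank Q = 2 N`.
-/

open scoped InnerProductSpace

variable {H : Type*} [NormedAddCommGroup H] [InnerProductSpace ℂ H] [CompleteSpace H]

open Module

namespace IsOrthogonalProjection

variable {P R : H →L[ℂ] H}

lemma isStarProjection (hP : IsOrthogonalProjection P) : IsStarProjection P := ⟨hP.2, hP.1⟩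

lemma apply_apply (hP : IsOrthogonalProjection P) (x : H) : P (P x) = P x :=
  DFunLike.congr_fun hP.2 x

lemma apply_eq_self_iff (hP : IsOrthogonalProjection P) {x : H} : P x = x ↔ x ∈ P.range :=
  ⟨fun h => ⟨x, h⟩, by rintro ⟨y, rfl⟩; exact hP.apply_apply y⟩

lemma ker_eq_orthogonal_range (hP : IsOrthogonalProjection P) : P.ker = P.rangeᗮ := by
  rw [ContinuousLinearMap.orthogonal_range, ← ContinuousLinearMap.star_eq_adjoint, hP.1.star_eq]

lemma mul_eq_right_of_range_le (hR : IsOrthogonalProjection R) (h : P.range ≤ R.range) :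
    R * P = P :=
  ContinuousLinearMap.ext fun x => hR.apply_eq_self_iff.2 (h ⟨x, rfl⟩)

lemma mul_eq_left_of_range_le (hP : IsOrthogonalProjection P) (hR : IsOrthogonalProjection R)
    (h : P.range ≤ R.range) : P * R = P := by
  simpa only [star_mul, hP.1.star_eq, hR.1.star_eq] using
    congr_arg star (hR.mul_eq_right_of_range_le h)

lemma range_sub_of_range_le (hP : IsOrthogonalProjection P) (hR : IsOrthogonalProjection R)
    (h : P.range ≤ R.range) : ((R : H →ₗ[ℂ] H) - P).range = P.rangeᗮ ⊓ R.range := by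
  have hRP := DFunLike.congr_fun (hR.mul_eq_right_of_range_le h)
  have hPR := DFunLike.congr_fun (hP.mul_eq_left_of_range_le hR h)
  ext x
  rw [Submodule.mem_inf, ← hP.ker_eq_orthogonal_range, LinearMap.mem_ker,
    ← hR.apply_eq_self_iff]
  constructor
  · rintro ⟨y, rfl⟩
    simp [← mul_apply_eq_comp, hRP, hPR, hP.apply_apply, hR.apply_apply]
  · rintro ⟨hPx, hRx⟩
    exact ⟨x, by simp [hPx, hRx]⟩

lemma finrank_range_sub_of_range_le (hP : IsOrthogonalProjection P)
    (hR : IsOrthogonalProjection R) (h : P.range ≤ R.range) [FiniteDimensional ℂ R.range] :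
    finrank ℂ ((R : H →ₗ[ℂ] H) - P).range = finrank ℂ R.range - finrank ℂ P.range := by
  rw [hP.range_sub_of_range_le hR h, ← Submodule.finrank_add_inf_finrank_orthogonal h,
    Nat.add_sub_cancel_left]

variable {E F Q G : H →L[ℂ] H}

lemma range_sub_inf_range_sub_eq_bot_of_range_eq_inf (hE : IsOrthogonalProjection E)
    (hF : IsOrthogonalProjection F) (hQ : IsOrthogonalProjection Q)
    (hQr : Q.range = E.range ⊓ F.range) :
    ((E : H →ₗ[ℂ] H) - Q).range ⊓ ((F : H →ₗ[ℂ] H) - Q).range = ⊥ := by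
  rw [hQ.range_sub_of_range_le hE (hQr ▸ inf_le_left),
    hQ.range_sub_of_range_le hF (hQr ▸ inf_le_right), inf_inf_inf_comm, inf_idem, ← hQr,
    inf_comm, Submodule.inf_orthogonal_eq_bot]

lemma range_sub_inf_range_sub_eq_bot_of_range_eq_sup (hE : IsOrthogonalProjection E)
    (hF : IsOrthogonalProjection F) (hG : IsOrthogonalProjection G)
    (hGr : G.range = E.range ⊔ F.range) :
    ((G : H →ₗ[ℂ] H) - E).range ⊓ ((G : H →ₗ[ℂ] H) - F).range = ⊥ := by
  rw [hE.range_sub_of_range_le hG (hGr ▸ le_sup_left),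
    hF.range_sub_of_range_le hG (hGr ▸ le_sup_right), inf_inf_inf_comm, inf_idem,
    Submodule.inf_orthogonal, ← hGr, inf_comm, Submodule.inf_orthogonal_eq_bot]

lemma apply_eq_sum (hP : IsOrthogonalProjection P) {κ : Type*} [Fintype κ]
    (v : OrthonormalBasis κ ℂ P.range) (x : H) :
    P x = ∑ j, ⟪(v j : H), x⟫_ℂ • (v j : H) := by
  obtain ⟨_, hPeq⟩ := isStarProjection_iff_eq_starProjection_range.mp hP.isStarProjection
  conv_lhs => rw [hPeq]
  rw [Submodule.starProjection_apply, v.orthogonalProjectionOnto_apply_eq_sum]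
  simp

end IsOrthogonalProjection

def HasTraceAlong {ι : Type*} (b : HilbertBasis ι ℂ H) (A : H →L[ℂ] H) (t : ℂ) : Prop :=
  HasSum (fun i => ⟪b i, A (b i)⟫_ℂ) t

namespace HasTraceAlong

variable {ι : Type*} {b : HilbertBasis ι ℂ H} {A B : H →L[ℂ] H} {s t : ℂ}

omit [CompleteSpace H] in
lemma traceAlong_eq (h : HasTraceAlong b A t) : traceAlong b A = t := HasSum.tsum_eq h

omit [CompleteSpace H] in
lemma add (hA : HasTraceAlong b A s) (hB : HasTraceAlong b B t) :
    HasTraceAlong b (A + B) (s + t) := by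
  simpa only [HasTraceAlong, add_apply, inner_add_right] using HasSum.add hA hB

omit [CompleteSpace H] in
lemma sub (hA : HasTraceAlong b A s) (hB : HasTraceAlong b B t) :
    HasTraceAlong b (A - B) (s - t) := by
  simpa only [HasTraceAlong, sub_apply, inner_sub_right] using HasSum.sub hA hB

end HasTraceAlong

namespace IsOrthogonalProjection

variable {P R : H →L[ℂ] H} {ι : Type*} (b : HilbertBasis ι ℂ H)

lemma hasTraceAlong_mul_of_orthonormalBasis (hP : IsOrthogonalProjection P) {κ : Type*}
    [Fintype κ] (v : OrthonormalBasis κ ℂ P.range) (B : H →L[ℂ] H) :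
    HasTraceAlong b (P * B) (∑ j, ⟪(v j : H), B (v j)⟫_ℂ) := by
  have hterm : ∀ i, ⟪b i, (P * B) (b i)⟫_ℂ =
      ∑ j, ⟪B.adjoint (v j), b i⟫_ℂ * ⟪b i, (v j : H)⟫_ℂ := fun i => by
    rw [mul_apply_eq_comp, hP.apply_eq_sum v, inner_sum]
    refine Finset.sum_congr rfl fun j _ => ?_
    rw [inner_smul_right, ContinuousLinearMap.adjoint_inner_left, mul_comm]
  simp only [HasTraceAlong, hterm, ← ContinuousLinearMap.adjoint_inner_left B]
  exact hasSum_sum fun j _ => b.hasSum_inner_mul_inner _ _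

lemma hasTraceAlong_mul (hP : IsOrthogonalProjection P) [FiniteDimensional ℂ P.range]
    (B : H →L[ℂ] H) : HasTraceAlong b (P * B) (traceAlong b (P * B)) := by
  have h := hP.hasTraceAlong_mul_of_orthonormalBasis b (stdOrthonormalBasis ℂ P.range) B
  rwa [h.traceAlong_eq]

lemma hasTraceAlong (hP : IsOrthogonalProjection P) [FiniteDimensional ℂ P.range] :
    HasTraceAlong b P (finrank ℂ P.range) := by
  simpa [← Submodule.coe_norm, OrthonormalBasis.norm_eq_one] using
    hP.hasTraceAlong_mul_of_orthonormalBasis b (stdOrthonormalBasis ℂ P.range) 1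

lemma traceAlong_mul_comm (hP : IsOrthogonalProjection P) (hR : IsOrthogonalProjection R)
    [FiniteDimensional ℂ P.range] [FiniteDimensional ℂ R.range] :
    traceAlong b (R * P) = traceAlong b (P * R) := by
  let v := stdOrthonormalBasis ℂ P.range
  let w := stdOrthonormalBasis ℂ R.range
  rw [(hR.hasTraceAlong_mul_of_orthonormalBasis b w P).traceAlong_eq,
    (hP.hasTraceAlong_mul_of_orthonormalBasis b v R).traceAlong_eq]
  simp only [hP.apply_eq_sum v, hR.apply_eq_sum w, inner_sum, inner_smul_right]
  rw [Finset.sum_comm]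
  exact Finset.sum_congr rfl fun _ _ => Finset.sum_congr rfl fun _ _ => mul_comm _ _

variable {E F : H →L[ℂ] H}

lemma hasTraceAlong_sub_mul_sub (hE : IsOrthogonalProjection E) (hF : IsOrthogonalProjection F)
    [FiniteDimensional ℂ E.range] [FiniteDimensional ℂ F.range] :
    HasTraceAlong b ((E - F) * (E - F))
      (finrank ℂ E.range + finrank ℂ F.range - 2 * traceAlong b (E * F)) := by
  have hsq : (E - F) * (E - F) = E + F - E * F - F * E := by
    rw [sub_mul, mul_sub, mul_sub, hE.2, hF.2]; abel
  have hFE := hF.hasTraceAlong_mul b E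
  rw [hE.traceAlong_mul_comm b hF] at hFE
  rw [hsq, two_mul, ← sub_sub]
  exact (((hE.hasTraceAlong b).add (hF.hasTraceAlong b)).sub (hE.hasTraceAlong_mul b F)).sub
    hFE

lemma hasTraceAlong_sub_mul_sub_of_le (hE : IsOrthogonalProjection E)
    (hF : IsOrthogonalProjection F) (hP : IsOrthogonalProjection P)
    (hPE : P.range ≤ E.range) (hPF : P.range ≤ F.range)
    [FiniteDimensional ℂ E.range] [FiniteDimensional ℂ P.range] :
    HasTraceAlong b ((E - P) * (F - P)) (traceAlong b (E * F) - finrank ℂ P.range) := by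
  have h : (E - P) * (F - P) = E * F - P := by
    rw [sub_mul, mul_sub, mul_sub, hE.mul_eq_right_of_range_le hPE,
      hP.mul_eq_left_of_range_le hF hPF, hP.2]
    abel
  rw [h]
  exact (hE.hasTraceAlong_mul b F).sub (hP.hasTraceAlong b)

lemma hasTraceAlong_sub_mul_sub_of_ge (hE : IsOrthogonalProjection E)
    (hF : IsOrthogonalProjection F) (hR : IsOrthogonalProjection R)
    (hER : E.range ≤ R.range) (hFR : F.range ≤ R.range)
    [FiniteDimensional ℂ E.range] [FiniteDimensional ℂ F.range] [FiniteDimensional ℂ R.range] :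
    HasTraceAlong b ((R - E) * (R - F))
      (finrank ℂ R.range - finrank ℂ F.range - finrank ℂ E.range + traceAlong b (E * F)) := by
  have h : (R - E) * (R - F) = R - F - E + E * F := by
    rw [sub_mul, mul_sub, mul_sub, hR.2, hR.mul_eq_right_of_range_le hFR,
      hE.mul_eq_left_of_range_le hR hER]
    abel
  rw [h]
  exact (((hR.hasTraceAlong b).sub (hF.hasTraceAlong b)).sub (hE.hasTraceAlong b)).add
    (hE.hasTraceAlong_mul b F)

end IsOrthogonalProjection

/-- Let `E, F` be orthogonal projections of the same finite rank `N` on a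
complex Hilbert space, let `Q := E ∧ F` (the projection onto `ran E ⊓ ran F`) and `G := E ∨ F`
(the projection onto `ran E ⊔ ran F`), and set `E′ := E − Q`, `F′ := F − Q`,
`E′^⊥ := G − E`, `F′^⊥ := G − F` and `N′ := N − rank Q`.  Then `E′ ∧ F′ = 0`,
`E′^⊥ ∧ F′^⊥ = 0`, the projections `E′, F′, E′^⊥, F′^⊥` all have rank `N′`, and
`Tr[(E − F)²] = Tr[(E′ − F′)²] = Tr[(E′^⊥ − F′^⊥)²] = 2[N − Tr(EF)] = 2[N′ − Tr(E′F′)]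
 = 2[N′ − Tr(E′^⊥F′^⊥)]`. -/
theorem statement14 {H : Type*} [NormedAddCommGroup H] [InnerProductSpace ℂ H] [CompleteSpace H]
    {ι : Type*} (b : HilbertBasis ι ℂ H) (N : ℕ)
    (E F Q G : H →L[ℂ] H)
    (hE : IsOrthogonalProjection E) (hF : IsOrthogonalProjection F)
    (hQ : IsOrthogonalProjection Q) (hG : IsOrthogonalProjection G)
    (hEfd : FiniteDimensional ℂ (LinearMap.range (E : H →ₗ[ℂ] H)))
    (hFfd : FiniteDimensional ℂ (LinearMap.range (F : H →ₗ[ℂ] H)))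
    (hEr : Module.finrank ℂ (LinearMap.range (E : H →ₗ[ℂ] H)) = N)
    (hFr : Module.finrank ℂ (LinearMap.range (F : H →ₗ[ℂ] H)) = N)
    (hQr : LinearMap.range (Q : H →ₗ[ℂ] H) =
      LinearMap.range (E : H →ₗ[ℂ] H) ⊓ LinearMap.range (F : H →ₗ[ℂ] H))
    (hGr : LinearMap.range (G : H →ₗ[ℂ] H) =
      LinearMap.range (E : H →ₗ[ℂ] H) ⊔ LinearMap.range (F : H →ₗ[ℂ] H)) :
    (LinearMap.range ((E - Q) : H →ₗ[ℂ] H) ⊓ LinearMap.range ((F - Q) : H →ₗ[ℂ] H) = ⊥) ∧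
    (LinearMap.range ((G - E) : H →ₗ[ℂ] H) ⊓ LinearMap.range ((G - F) : H →ₗ[ℂ] H) = ⊥) ∧
    (Module.finrank ℂ (LinearMap.range ((E - Q) : H →ₗ[ℂ] H)) =
      N - Module.finrank ℂ (LinearMap.range (Q : H →ₗ[ℂ] H))) ∧
    (Module.finrank ℂ (LinearMap.range ((F - Q) : H →ₗ[ℂ] H)) =
      N - Module.finrank ℂ (LinearMap.range (Q : H →ₗ[ℂ] H))) ∧
    (Module.finrank ℂ (LinearMap.range ((G - E) : H →ₗ[ℂ] H)) =
      N - Module.finrank ℂ (LinearMap.range (Q : H →ₗ[ℂ] H))) ∧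
    (Module.finrank ℂ (LinearMap.range ((G - F) : H →ₗ[ℂ] H)) =
      N - Module.finrank ℂ (LinearMap.range (Q : H →ₗ[ℂ] H))) ∧
    (traceAlong b ((E - F) * (E - F)) =
      traceAlong b (((E - Q) - (F - Q)) * ((E - Q) - (F - Q)))) ∧
    (traceAlong b ((E - F) * (E - F)) =
      traceAlong b (((G - E) - (G - F)) * ((G - E) - (G - F)))) ∧
    (traceAlong b ((E - F) * (E - F)) = 2 * ((N : ℂ) - traceAlong b (E * F))) ∧
    (traceAlong b ((E - F) * (E - F)) =
      2 * (((N - Module.finrank ℂ (LinearMap.range (Q : H →ₗ[ℂ] H)) : ℕ) : ℂ) -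
        traceAlong b ((E - Q) * (F - Q)))) ∧
    (traceAlong b ((E - F) * (E - F)) =
      2 * (((N - Module.finrank ℂ (LinearMap.range (Q : H →ₗ[ℂ] H)) : ℕ) : ℂ) -
        traceAlong b ((G - E) * (G - F)))) := by
  have hQE : Q.range ≤ E.range := hQr ▸ inf_le_left
  have hQF : Q.range ≤ F.range := hQr ▸ inf_le_right
  have hEG : E.range ≤ G.range := hGr ▸ le_sup_left
  have hFG : F.range ≤ G.range := hGr ▸ le_sup_right
  have : FiniteDimensional ℂ Q.range := Submodule.finiteDimensional_of_le hQE
  have : FiniteDimensional ℂ G.range := hGr ▸ inferInstance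
  have hdim : finrank ℂ G.range + finrank ℂ Q.range = N + N := by
    rw [hGr, hQr, Submodule.finrank_sup_add_finrank_inf_eq, hEr, hFr]
  have hQN : finrank ℂ Q.range ≤ N := hEr ▸ Submodule.finrank_mono hQE
  have hdimC : (finrank ℂ G.range : ℂ) = N + N - finrank ℂ Q.range := by
    rw [← Nat.cast_add, ← hdim]; push_cast; ring
  have htrEF := (hE.hasTraceAlong_sub_mul_sub b hF).traceAlong_eq
  have htrEQ := (hE.hasTraceAlong_sub_mul_sub_of_le b hF hQ hQE hQF).traceAlong_eq
  have htrGE := (hE.hasTraceAlong_sub_mul_sub_of_ge b hF hG hEG hFG).traceAlong_eq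
  refine ⟨hE.range_sub_inf_range_sub_eq_bot_of_range_eq_inf hF hQ hQr,
    hE.range_sub_inf_range_sub_eq_bot_of_range_eq_sup hF hG hGr,
    by rw [hQ.finrank_range_sub_of_range_le hE hQE, hEr],
    by rw [hQ.finrank_range_sub_of_range_le hF hQF, hFr],
    by rw [hE.finrank_range_sub_of_range_le hG hEG, hEr]; omega,
    by rw [hF.finrank_range_sub_of_range_le hG hFG, hFr]; omega, ?_, ?_, ?_, ?_, ?_⟩
  · rw [sub_sub_sub_cancel_right]
  · rw [sub_sub_sub_cancel_left, ← neg_sub E F, neg_mul_neg]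
  · rw [htrEF, hEr, hFr]; ring
  · rw [htrEF, htrEQ, Nat.cast_sub hQN, hEr, hFr]; ring
  · rw [htrEF, htrGE, Nat.cast_sub hQN, hEr, hFr, hdimC]; ring
end
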